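/- arXiv:2507.15312 — 2 statements merged into one kernel-verified Lean document; each statement's English description precedes it below -/
import Mathlib

section
/- The language L = {a^n b^n : n ≥ 1} ∪ {b^n : n ≥ 1} is generated by the external contextual grammar with axioms {ab, b} and selection pairs (Pre({a^n b^m : n,m ≥ 1}), {(a,b)}) and ({b}*, {(ε,b)}), where both selection languages are prefix-closed. -/
/-- An external contextual grammar: a finite list of selection pairs
(selection language, finite list of contexts) and a finite list of axioms. -/
structure ECG (α : Type*) where
  pairs : List (Set (List α) × List (List α × List α))
  axioms : List (List α)

/-- Every context `(u, v)` satisfies `uv ≠ ε`. -/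
def ECG.WellFormed {α : Type*} (G : ECG α) : Prop :=
  ∀ p ∈ G.pairs, ∀ c ∈ p.2, c.1 ++ c.2 ≠ []

/-- External derivation step: `x ⟹ u x v` for a context `(u,v)` of a pair
whose selection language contains `x`. -/
def ECG.Step {α : Type*} (G : ECG α) (x y : List α) : Prop :=
  ∃ p ∈ G.pairs, x ∈ p.1 ∧ ∃ c ∈ p.2, y = c.1 ++ x ++ c.2

/-- The language generated externally: all words derivable from the axioms. -/
def ECG.lang {α : Type*} (G : ECG α) : Set (List α) :=
  { w | ∃ x ∈ G.axioms, Relation.ReflTransGen G.Step x w }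

def PrefixClosed {α : Type*} (L : Set (List α)) : Prop :=
  ∀ x y : List α, x ++ y ∈ L → x ∈ L

/-- `preClosure M` is the set of all prefixes of words of `M`. -/
def preClosure {α : Type*} (M : Set (List α)) : Set (List α) :=
  { x | ∃ y : List α, x ++ y ∈ M }

/-!
The language is invariant under derivation steps: the only word of the form `aⁿbⁿ` (`n ≥ 1`) in
a selection language lies in the first one, since it starts with `a`, and is sent to `aⁿ⁺¹bⁿ⁺¹`;
the word `bⁿ` lies only in `b*`, since no prefix of `a⁺b⁺` starts with `b`, and is sent to
`bⁿ⁺¹`. Conversely, iterating these two steps from the axioms `ab` and `b` reaches every word.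
-/

namespace ECG

variable {α : Type*} {G : ECG α}

theorem lang_subset_of_step_closed {L : Set (List α)} (hax : ∀ x ∈ G.axioms, x ∈ L)
    (hstep : ∀ x y, x ∈ L → G.Step x y → y ∈ L) : G.lang ⊆ L := by
  rintro w ⟨x, hx, hxw⟩
  induction hxw with
  | refl => exact hax x hx
  | tail _ hyz ih => exact hstep _ _ ih hyz

theorem mem_lang_of_mem_axioms {x : List α} (hx : x ∈ G.axioms) : x ∈ G.lang :=
  ⟨x, hx, .refl⟩

theorem mem_lang_of_step {x y : List α} (hx : x ∈ G.lang) (hxy : G.Step x y) : y ∈ G.lang :=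
  let ⟨z, hz, hzx⟩ := hx
  ⟨z, hz, hzx.tail hxy⟩

end ECG

section

variable {α : Type*}

theorem preClosure_prefixClosed (M : Set (List α)) : PrefixClosed (preClosure M) :=
  fun x y ⟨z, hz⟩ => ⟨y ++ z, by simpa using hz⟩

theorem prefixClosed_setOf_eq_replicate (b : α) :
    PrefixClosed { w | ∃ n : ℕ, w = List.replicate n b } := by
  rintro x y ⟨n, hn⟩
  refine ⟨x.length, List.eq_replicate_iff.mpr ⟨rfl, fun c hc => ?_⟩⟩
  exact List.eq_of_mem_replicate (hn ▸ List.mem_append_left y hc)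

theorem cons_ne_replicate {a b : α} (hab : a ≠ b) (x : List α) (n : ℕ) :
    a :: x ≠ List.replicate n b :=
  fun h => hab (List.eq_of_mem_replicate (h ▸ List.mem_cons_self))

variable (a b : α)

def anbnGrammar : ECG α :=
  ⟨[(preClosure { w | ∃ n ≥ 1, ∃ m ≥ 1,
        w = List.replicate n a ++ List.replicate m b }, [([a], [b])]),
    ({ w | ∃ n : ℕ, w = List.replicate n b }, [([], [b])])],
   [[a, b], [b]]⟩

theorem anbnGrammar_step_iff {x y : List α} :
    (anbnGrammar a b).Step x y ↔
      (x ∈ preClosure { w | ∃ n ≥ 1, ∃ m ≥ 1, w = List.replicate n a ++ List.replicate m b } ∧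
        y = a :: x ++ [b]) ∨
      ((∃ n : ℕ, x = List.replicate n b) ∧ y = x ++ [b]) := by
  simp [ECG.Step, anbnGrammar]

def anbnLang : Set (List α) :=
  { w | ∃ n ≥ 1, w = List.replicate n a ++ List.replicate n b } ∪
    { w | ∃ n ≥ 1, w = List.replicate n b }

variable {a b}

theorem cons_not_mem_preClosure (hab : a ≠ b) (x : List α) :
    b :: x ∉ preClosure { w | ∃ n ≥ 1, ∃ m ≥ 1, w = List.replicate n a ++ List.replicate m b } := by
  rintro ⟨z, n, hn, m, -, h⟩
  obtain ⟨k, rfl⟩ := Nat.exists_eq_add_of_le' hn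
  simp only [List.replicate_succ, List.cons_append, List.cons.injEq] at h
  exact hab h.1.symm

theorem cons_replicate_append_replicate_append_singleton (n : ℕ) :
    a :: (List.replicate n a ++ List.replicate n b) ++ [b] =
      List.replicate (n + 1) a ++ List.replicate (n + 1) b := by
  rw [List.replicate_succ, List.replicate_succ' (a := b)]
  simp

theorem mem_anbnLang_of_step (hab : a ≠ b) {x y : List α}
    (hx : x ∈ anbnLang a b) (hxy : (anbnGrammar a b).Step x y) : y ∈ anbnLang a b := by
  rw [anbnGrammar_step_iff] at hxy
  rcases hx with ⟨n, hn, rfl⟩ | ⟨n, hn, rfl⟩ <;>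
    obtain ⟨k, rfl⟩ := Nat.exists_eq_add_of_le' hn
  · rcases hxy with ⟨-, rfl⟩ | ⟨⟨m, hm⟩, -⟩
    · exact Or.inl ⟨k + 2, by omega, cons_replicate_append_replicate_append_singleton _⟩
    · exact absurd hm (cons_ne_replicate hab _ _)
  · rcases hxy with ⟨hmem, -⟩ | ⟨-, rfl⟩
    · exact absurd hmem (cons_not_mem_preClosure hab _)
    · exact Or.inr ⟨k + 2, by omega, (List.replicate_succ' ..).symm⟩

theorem replicate_append_replicate_mem_anbnGrammar_lang (n : ℕ) :
    List.replicate (n + 1) a ++ List.replicate (n + 1) b ∈ (anbnGrammar a b).lang := by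
  induction n with
  | zero => exact ECG.mem_lang_of_mem_axioms (by simp [anbnGrammar])
  | succ n ih =>
    refine ECG.mem_lang_of_step ih ((anbnGrammar_step_iff a b).mpr (Or.inl ⟨?_, ?_⟩))
    · exact ⟨[], n + 1, by omega, n + 1, by omega, by simp⟩
    · exact (cons_replicate_append_replicate_append_singleton _).symm

theorem replicate_mem_anbnGrammar_lang (n : ℕ) :
    List.replicate (n + 1) b ∈ (anbnGrammar a b).lang := by
  induction n with
  | zero => exact ECG.mem_lang_of_mem_axioms (by simp [anbnGrammar])
  | succ n ih =>
    exact ECG.mem_lang_of_step ih ((anbnGrammar_step_iff a b).mpr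
      (Or.inr ⟨⟨n + 1, rfl⟩, List.replicate_succ' ..⟩))

theorem anbnGrammar_lang (hab : a ≠ b) : (anbnGrammar a b).lang = anbnLang a b := by
  refine subset_antisymm (ECG.lang_subset_of_step_closed ?_
    fun _ _ => mem_anbnLang_of_step hab) ?_
  · simp only [anbnGrammar, List.mem_cons, List.not_mem_nil, or_false]
    rintro x (rfl | rfl)
    exacts [Or.inl ⟨1, le_rfl, rfl⟩, Or.inr ⟨1, le_rfl, rfl⟩]
  · rintro w (⟨n, hn, rfl⟩ | ⟨n, hn, rfl⟩) <;> obtain ⟨k, rfl⟩ := Nat.exists_eq_add_of_le' hn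
    exacts [replicate_append_replicate_mem_anbnGrammar_lang k,
      replicate_mem_anbnGrammar_lang k]

end

theorem stmt_12 {α : Type*} (a b : α) (hab : a ≠ b)
    (G : ECG α)
    (hG : G = ⟨[(preClosure { w | ∃ n ≥ 1, ∃ m ≥ 1,
                    w = List.replicate n a ++ List.replicate m b }, [([a], [b])]),
                ({ w | ∃ n : ℕ, w = List.replicate n b }, [([], [b])])],
               [[a, b], [b]]⟩) :
    (∀ p ∈ G.pairs, PrefixClosed p.1) ∧
    G.lang = { w | ∃ n ≥ 1, w = List.replicate n a ++ List.replicate n b } ∪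
             { w | ∃ n ≥ 1, w = List.replicate n b } := by
  change G = anbnGrammar a b at hG
  subst hG
  refine ⟨?_, anbnGrammar_lang hab⟩
  simp only [anbnGrammar, List.mem_cons, List.not_mem_nil, or_false, forall_eq_or_imp, forall_eq]
  exact ⟨preClosure_prefixClosed _, prefixClosed_setOf_eq_replicate b⟩
end

section
/- The language L = {b^3 a^n : n ≥ 1} ∪ {b^2} cannot be generated by any external contextual grammar all of whose selection languages are prefix-closed. -/
/-!
In a grammar generating `L`, no derivation step can start from a word `b³aᵏ`: such a step has to
append a nonempty context `(ε, aᵐ)`, and by prefix-closedness the same selection language contains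
`b²`, so the same context yields `b²aᵐ ∉ L`. Hence every step starts from `b²`, and the generated
language is contained in the finite set of axioms and one-step successors of `b²`, while `L` is
infinite.
-/

open List

namespace ECG

variable {α : Type*} (G : ECG α)

theorem step_mem_lang {x y : List α} (hx : x ∈ G.lang) (h : G.Step x y) : y ∈ G.lang :=
  let ⟨x₀, hx₀, hx₀x⟩ := hx
  ⟨x₀, hx₀, hx₀x.tail h⟩

theorem lang_finite_of_step_source (x₀ : List α)
    (h : ∀ y z, y ∈ G.lang → G.Step y z → y = x₀) : G.lang.Finite := by
  refine (G.axioms ++ G.pairs.flatMap fun p => p.2.map fun c => c.1 ++ x₀ ++ c.2)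
    |>.finite_toSet.subset ?_
  rintro w ⟨x, hx, hxw⟩
  rcases hxw.cases_tail with rfl | ⟨y, hxy, hyw⟩
  · exact mem_append_left _ hx
  · obtain rfl := h y w ⟨x, hx, hxy⟩ hyw
    obtain ⟨p, hp, -, c, hc, rfl⟩ := hyw
    exact mem_append_right _ (mem_flatMap.2 ⟨p, hp, mem_map_of_mem hc⟩)

end ECG

section

variable {α : Type*}

def targetLang (a b : α) : Set (List α) :=
  { w | ∃ n ≥ 1, w = replicate 3 b ++ replicate n a } ∪ {replicate 2 b}

theorem targetLang_infinite (a b : α) : (targetLang a b).Infinite :=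
  Set.infinite_of_injective_forall_mem (f := fun n => replicate 3 b ++ replicate (n + 1) a)
    (fun m n h => by simpa using congrArg length h) fun n => Or.inl ⟨n + 1, by omega, rfl⟩

theorem replicate_two_append_replicate_not_mem_targetLang {a b : α} (hab : a ≠ b) {m : ℕ}
    (hm : 0 < m) : replicate 2 b ++ replicate m a ∉ targetLang a b := by
  obtain ⟨m, rfl⟩ := Nat.exists_eq_add_of_lt hm
  rintro (⟨n, -, h⟩ | h)
  · exact hab (by simpa [replicate_succ] using h : a = b ∧ _).1
  · simpa using congrArg length h

theorem eq_nil_and_eq_replicate_of_wrap_eq {a b : α} (hab : a ≠ b) {u v : List α} {k n : ℕ}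
    (h : u ++ (replicate 3 b ++ replicate k a) ++ v = replicate 3 b ++ replicate n a) :
    u = [] ∧ v = replicate (n - k) a := by
  classical
  obtain rfl : u = [] := by
    cases u with
    | nil => rfl
    | cons x u =>
      obtain rfl : x = b := by simpa [replicate_succ] using congrArg head? h
      have hcount := congrArg (count x) h
      simp [count_replicate, hab] at hcount
      omega
  have h' : replicate k a ++ v = replicate n a := by simpa using h
  exact ⟨rfl, by simpa using congrArg (drop k) h'⟩

theorem step_source_eq_of_lang_eq_targetLang {G : ECG α} {a b : α} (hab : a ≠ b)
    (hWF : G.WellFormed) (hPC : ∀ p ∈ G.pairs, PrefixClosed p.1) (hL : G.lang = targetLang a b)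
    {y z : List α} (hy : y ∈ G.lang) (hyz : G.Step y z) : y = replicate 2 b := by
  have hz := G.step_mem_lang hy hyz
  rw [hL] at hy hz
  obtain ⟨p, hp, hyp, c, hc, rfl⟩ := hyz
  rcases hy with ⟨k, -, rfl⟩ | hy
  · exfalso
    rcases hz with ⟨n, -, hz⟩ | hz
    · obtain ⟨hu, hv⟩ := eq_nil_and_eq_replicate_of_wrap_eq hab hz
      have hbb : replicate 2 b ∈ p.1 := hPC p hp _ (b :: replicate k a) hyp
      have hm : 0 < n - k := Nat.pos_of_ne_zero fun h0 => hWF p hp c hc (by simp [hu, hv, h0])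
      have hbbv : replicate 2 b ++ c.2 ∈ G.lang :=
        G.step_mem_lang (hL ▸ Or.inr rfl) ⟨p, hp, hbb, c, hc, by simp [hu]⟩
      rw [hL, hv] at hbbv
      exact replicate_two_append_replicate_not_mem_targetLang hab hm hbbv
    · have hlen := congrArg length hz
      simp only [length_append, length_replicate] at hlen
      omega
  · exact hy

end

theorem stmt_17 {α : Type*} (a b : α) (hab : a ≠ b) :
    ¬ ∃ G : ECG α, G.WellFormed ∧ (∀ p ∈ G.pairs, PrefixClosed p.1) ∧
      G.lang = { w | ∃ n ≥ 1, w = List.replicate 3 b ++ List.replicate n a } ∪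
               {List.replicate 2 b} := by
  rintro ⟨G, hWF, hPC, hL⟩
  have hfin : G.lang.Finite := G.lang_finite_of_step_source (replicate 2 b)
    fun _ _ => step_source_eq_of_lang_eq_targetLang hab hWF hPC hL
  rw [hL] at hfin
  exact targetLang_infinite a b hfin
end
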